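/- For every k ≥ 0 such that J_k and H_k are nonsingular, with J̃_k := J*(J_k⁻¹ − J*⁻¹) and F_k := ‖F(x_k)‖, Broyden's 'bad' update satisfies τ_{k+1}² ≤ τ_k² − (F_{k+1}²/F_k²)·1/[(1 + ‖(J_k − J*)J*⁻¹‖)² · ‖J*H_k‖² · ‖(J*H_k)⁻¹‖²] + 2(τ_k‖J̃_k‖ + ‖J̃_k‖²). -/

import Mathlib

/-!
Write `A = J*(H_k − J*⁻¹)`, `C = J*(J_k⁻¹ − J*⁻¹)` and `q = y_k / ‖y_k‖`. Because `J_k⁻¹ y_k = u_k`,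
the update reads `J*(H_{k+1} − J*⁻¹) = A + (Cq − Aq) qᵀ`, a rank-one change of `A` along the unit
vector `q`, so that `τ_{k+1}² = τ_k² − ‖Aq‖² + ‖Cq‖²`. Since `u_k − H_k y_k = −H_k F(x_{k+1})`, the
vector `Cq − Aq` has norm `‖J*H_k F(x_{k+1})‖ / ‖y_k‖`; bounding `‖F(x_{k+1})‖` by `‖(J*H_k)⁻¹‖`
times the numerator and `‖y_k‖ ≤ (1 + ‖(J_k − J*)J*⁻¹‖) ‖J*H_k‖ ‖F(x_k)‖` shows that its square
dominates the residual-ratio term. Finally `‖Cq − Aq‖ ≤ ‖Aq‖ + ‖Cq‖`, `‖Aq‖ ≤ τ_k` and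
`‖Cq‖ ≤ ‖J̃_k‖`.
-/

open Matrix MeasureTheory

noncomputable def specNorm {n : ℕ} (A : Matrix (Fin n) (Fin n) ℝ) : ℝ :=
  ‖Matrix.toEuclideanCLM (𝕜 := ℝ) A‖

noncomputable def frobNorm {n : ℕ} (A : Matrix (Fin n) (Fin n) ℝ) : ℝ :=
  Real.sqrt (∑ i, ∑ j, (A i j) ^ 2)

noncomputable def vnorm {n : ℕ} (x : Fin n → ℝ) : ℝ :=
  Real.sqrt (∑ i, (x i) ^ 2)

noncomputable def intJac {n : ℕ} (J : (Fin n → ℝ) → Matrix (Fin n) (Fin n) ℝ)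
    (x u : Fin n → ℝ) : Matrix (Fin n) (Fin n) ℝ :=
  Matrix.of fun i j => ∫ t in (0:ℝ)..(1:ℝ), J (x + t • u) i j

section Norms

variable {n : ℕ}

lemma vnorm_eq_norm (x : Fin n → ℝ) : vnorm x = ‖WithLp.toLp 2 x‖ := by
  simp [vnorm, EuclideanSpace.norm_eq]

lemma vnorm_nonneg (x : Fin n → ℝ) : 0 ≤ vnorm x := Real.sqrt_nonneg _

lemma vnorm_sq (x : Fin n → ℝ) : vnorm x ^ 2 = ∑ i, x i ^ 2 :=
  Real.sq_sqrt (Finset.sum_nonneg fun _ _ => sq_nonneg _)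

lemma dotProduct_self_eq_vnorm_sq (x : Fin n → ℝ) : x ⬝ᵥ x = vnorm x ^ 2 := by
  rw [vnorm_sq]
  simp only [dotProduct, sq]

lemma vnorm_ne_zero {x : Fin n → ℝ} (hx : x ≠ 0) : vnorm x ≠ 0 := by
  simpa [vnorm_eq_norm] using hx

lemma vnorm_smul (c : ℝ) (x : Fin n → ℝ) : vnorm (c • x) = |c| * vnorm x := by
  simp [vnorm_eq_norm, norm_smul]

lemma vnorm_neg (x : Fin n → ℝ) : vnorm (-x) = vnorm x := by
  simp [vnorm_eq_norm]

lemma vnorm_add_le (x y : Fin n → ℝ) : vnorm (x + y) ≤ vnorm x + vnorm y := by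
  simpa [vnorm_eq_norm] using norm_add_le (WithLp.toLp 2 x) (WithLp.toLp 2 y)

lemma vnorm_sub_le (x y : Fin n → ℝ) : vnorm (x - y) ≤ vnorm x + vnorm y := by
  simpa [vnorm_eq_norm] using norm_sub_le (WithLp.toLp 2 x) (WithLp.toLp 2 y)

lemma specNorm_nonneg (A : Matrix (Fin n) (Fin n) ℝ) : 0 ≤ specNorm A := norm_nonneg _

lemma vnorm_mulVec_le_specNorm (A : Matrix (Fin n) (Fin n) ℝ) (x : Fin n → ℝ) :
    vnorm (A *ᵥ x) ≤ specNorm A * vnorm x := by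
  simpa [vnorm_eq_norm, specNorm] using (toEuclideanCLM (𝕜 := ℝ) A).le_opNorm (WithLp.toLp 2 x)

lemma vnorm_le_specNorm_inv_mul {A : Matrix (Fin n) (Fin n) ℝ} (hA : IsUnit A.det)
    (x : Fin n → ℝ) : vnorm x ≤ specNorm A⁻¹ * vnorm (A *ᵥ x) := by
  simpa [mulVec_mulVec, nonsing_inv_mul A hA] using vnorm_mulVec_le_specNorm A⁻¹ (A *ᵥ x)

lemma frobNorm_sq (A : Matrix (Fin n) (Fin n) ℝ) : frobNorm A ^ 2 = ∑ i, ∑ j, A i j ^ 2 :=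
  Real.sq_sqrt (Finset.sum_nonneg fun _ _ => Finset.sum_nonneg fun _ _ => sq_nonneg _)

lemma vnorm_mulVec_le_frobNorm (A : Matrix (Fin n) (Fin n) ℝ) (x : Fin n → ℝ) :
    vnorm (A *ᵥ x) ≤ frobNorm A * vnorm x := by
  refine le_of_sq_le_sq ?_ (mul_nonneg (Real.sqrt_nonneg _) (vnorm_nonneg x))
  rw [mul_pow, vnorm_sq, vnorm_sq, frobNorm_sq, Finset.sum_mul]
  simp only [mulVec, dotProduct]
  exact Finset.sum_le_sum fun i _ => Finset.sum_mul_sq_le_sq_mul_sq _ (A i) x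

lemma frobNorm_sq_add_vecMulVec (A : Matrix (Fin n) (Fin n) ℝ) (w : Fin n → ℝ) {q : Fin n → ℝ}
    (hq : vnorm q = 1) :
    frobNorm (A + vecMulVec w q) ^ 2
      = frobNorm A ^ 2 - vnorm (A *ᵥ q) ^ 2 + vnorm (A *ᵥ q + w) ^ 2 := by
  have hq2 : ∑ j, q j ^ 2 = 1 := by rw [← vnorm_sq, hq, one_pow]
  have hrow : ∀ i, ∑ j, (A i j + w i * q j) ^ 2
      = ∑ j, A i j ^ 2 - (A *ᵥ q) i ^ 2 + ((A *ᵥ q) i + w i) ^ 2 := by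
    intro i
    have hexpand : ∑ j, (A i j + w i * q j) ^ 2
        = ∑ j, A i j ^ 2 + 2 * w i * ∑ j, A i j * q j + w i ^ 2 * ∑ j, q j ^ 2 := by
      simp only [Finset.mul_sum, ← Finset.sum_add_distrib]
      exact Finset.sum_congr rfl fun j _ => by ring
    rw [hexpand, hq2, show ∑ j, A i j * q j = (A *ᵥ q) i from rfl]
    ring
  simp only [frobNorm_sq, vnorm_sq, Matrix.add_apply, vecMulVec_apply, Pi.add_apply, hrow]
  rw [Finset.sum_add_distrib, Finset.sum_sub_distrib]

end Norms

lemma sub_eq_intJac_mulVec {n : ℕ} {F : (Fin n → ℝ) → (Fin n → ℝ)}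
    {J : (Fin n → ℝ) → Matrix (Fin n) (Fin n) ℝ}
    (hF : ∀ z, HasFDerivAt F (LinearMap.toContinuousLinearMap ((J z).mulVecLin)) z)
    (hJc : Continuous J) (x u : Fin n → ℝ) :
    F (x + u) - F x = intJac J x u *ᵥ u := by
  have hterm : ∀ i j, Continuous fun t : ℝ => J (x + t • u) i j * u j := fun i j => by fun_prop
  have hderiv : ∀ t : ℝ, HasDerivAt (fun s : ℝ => F (x + s • u)) (J (x + t • u) *ᵥ u) t := by
    intro t
    have hline : HasDerivAt (fun s : ℝ => x + s • u) u t := by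
      simpa using ((hasDerivAt_id t).smul_const u).const_add x
    simpa [Function.comp_def] using (hF (x + t • u)).comp_hasDerivAt t hline
  funext i
  have hftc : ∫ t in (0 : ℝ)..1, (J (x + t • u) *ᵥ u) i = F (x + u) i - F x i := by
    simpa using intervalIntegral.integral_eq_sub_of_hasDerivAt
      (fun t _ => hasDerivAt_pi.mp (hderiv t) i)
      ((continuous_finsetSum Finset.univ fun j _ => hterm i j).intervalIntegrable 0 1)
  rw [Pi.sub_apply, ← hftc]
  simp only [mulVec, dotProduct, intJac, of_apply]
  rw [intervalIntegral.integral_finsetSum fun j _ => (hterm i j).intervalIntegrable 0 1]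
  exact Finset.sum_congr rfl fun j _ => intervalIntegral.integral_mul_const _ _

lemma sq_div_sq_mul_one_div_sq_le {r r₀ c g : ℝ} (hr : 0 ≤ r) (h : r ≤ c * g * r₀) :
    r ^ 2 / r₀ ^ 2 * (1 / c ^ 2) ≤ g ^ 2 := by
  rcases eq_or_ne r₀ 0 with rfl | hr₀
  · simp [sq_nonneg]
  rcases eq_or_ne c 0 with rfl | hc
  · simp [sq_nonneg]
  rw [div_mul_div_comm, mul_one, div_le_iff₀ (by positivity)]
  calc r ^ 2 ≤ (c * g * r₀) ^ 2 := pow_le_pow_left₀ hr h 2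
    _ = g ^ 2 * (r₀ ^ 2 * c ^ 2) := by ring

section BroydenBad

variable {n : ℕ}

noncomputable def broydenBadUpdate (H : Matrix (Fin n) (Fin n) ℝ) (u y : Fin n → ℝ) :
    Matrix (Fin n) (Fin n) ℝ :=
  H + (y ⬝ᵥ y)⁻¹ • vecMulVec (u - H *ᵥ y) y

lemma mul_broydenBadUpdate_sub_inv (Js H : Matrix (Fin n) (Fin n) ℝ) (u y : Fin n → ℝ) :
    Js * (broydenBadUpdate H u y - Js⁻¹)
      = Js * (H - Js⁻¹) + vecMulVec ((vnorm y)⁻¹ • (Js *ᵥ (u - H *ᵥ y))) ((vnorm y)⁻¹ • y) := by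
  rw [broydenBadUpdate, add_sub_right_comm, Matrix.mul_add, Matrix.mul_smul, mul_vecMulVec,
    smul_vecMulVec, vecMulVec_smul, smul_smul, ← mul_inv, ← sq, dotProduct_self_eq_vnorm_sq]

lemma mul_sub_inv_mulVec {Js : Matrix (Fin n) (Fin n) ℝ} (hJs : IsUnit Js.det)
    (M : Matrix (Fin n) (Fin n) ℝ) (v : Fin n → ℝ) :
    (Js * (M - Js⁻¹)) *ᵥ v = Js *ᵥ (M *ᵥ v) - v := by
  rw [Matrix.mul_sub, mul_nonsing_inv Js hJs, sub_mulVec, one_mulVec, mulVec_mulVec]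

lemma vnorm_mulVec_le_one_add_specNorm {Js : Matrix (Fin n) (Fin n) ℝ} (hJs : IsUnit Js.det)
    (Jk : Matrix (Fin n) (Fin n) ℝ) (v : Fin n → ℝ) :
    vnorm (Jk *ᵥ v) ≤ (1 + specNorm ((Jk - Js) * Js⁻¹)) * vnorm (Js *ᵥ v) := by
  have hsplit : Jk *ᵥ v = Js *ᵥ v + ((Jk - Js) * Js⁻¹) *ᵥ (Js *ᵥ v) := by
    rw [mulVec_mulVec, Matrix.mul_assoc, nonsing_inv_mul Js hJs, Matrix.mul_one, sub_mulVec,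
      add_sub_cancel]
  calc vnorm (Jk *ᵥ v)
      ≤ vnorm (Js *ᵥ v) + specNorm ((Jk - Js) * Js⁻¹) * vnorm (Js *ᵥ v) :=
        hsplit ▸ (vnorm_add_le _ _).trans (add_le_add_right (vnorm_mulVec_le_specNorm _ _) _)
    _ = (1 + specNorm ((Jk - Js) * Js⁻¹)) * vnorm (Js *ᵥ v) := by ring

variable {Js H Jk : Matrix (Fin n) (Fin n) ℝ} {u f₀ f₁ : Fin n → ℝ}

lemma residual_ratio_le (hJs : IsUnit Js.det) (hH : IsUnit H.det) (hstep : u = -(H *ᵥ f₀))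
    (hsecant : f₁ - f₀ = Jk *ᵥ u) (hy : f₁ - f₀ ≠ 0) :
    vnorm f₁ ^ 2 / vnorm f₀ ^ 2 * (1 / ((1 + specNorm ((Jk - Js) * Js⁻¹)) ^ 2 *
        specNorm (Js * H) ^ 2 * specNorm ((Js * H)⁻¹) ^ 2))
      ≤ (vnorm ((Js * H) *ᵥ f₁) / vnorm (f₁ - f₀)) ^ 2 := by
  set δ := specNorm ((Jk - Js) * Js⁻¹)
  have hJsH : IsUnit (Js * H).det := by rw [det_mul]; exact hJs.mul hH
  have hsecant_le : vnorm (f₁ - f₀) ≤ (1 + δ) * (specNorm (Js * H) * vnorm f₀) := by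
    rw [hsecant]
    refine (vnorm_mulVec_le_one_add_specNorm hJs Jk u).trans
      (mul_le_mul_of_nonneg_left ?_ (by linarith [specNorm_nonneg ((Jk - Js) * Js⁻¹)]))
    rw [hstep, mulVec_neg, vnorm_neg, mulVec_mulVec]
    exact vnorm_mulVec_le_specNorm _ _
  rw [← mul_pow, ← mul_pow]
  refine sq_div_sq_mul_one_div_sq_le (vnorm_nonneg f₁) ?_
  set g := vnorm ((Js * H) *ᵥ f₁) / vnorm (f₁ - f₀) with hg
  calc vnorm f₁ ≤ specNorm (Js * H)⁻¹ * vnorm ((Js * H) *ᵥ f₁) :=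
        vnorm_le_specNorm_inv_mul hJsH f₁
    _ = specNorm (Js * H)⁻¹ * g * vnorm (f₁ - f₀) := by
        rw [hg, mul_assoc, div_mul_cancel₀ _ (vnorm_ne_zero hy)]
    _ ≤ specNorm (Js * H)⁻¹ * g * ((1 + δ) * (specNorm (Js * H) * vnorm f₀)) :=
        mul_le_mul_of_nonneg_left hsecant_le
          (mul_nonneg (specNorm_nonneg _) (div_nonneg (vnorm_nonneg _) (vnorm_nonneg _)))
    _ = (1 + δ) * specNorm (Js * H) * specNorm (Js * H)⁻¹ * g * vnorm f₀ := by ring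

theorem frobNorm_sq_broydenBadUpdate_le (hJs : IsUnit Js.det) (hH : IsUnit H.det)
    (hJk : IsUnit Jk.det) (hstep : u = -(H *ᵥ f₀)) (hsecant : f₁ - f₀ = Jk *ᵥ u)
    (hy : f₁ - f₀ ≠ 0) :
    frobNorm (Js * (broydenBadUpdate H u (f₁ - f₀) - Js⁻¹)) ^ 2 ≤
      frobNorm (Js * (H - Js⁻¹)) ^ 2
        - (vnorm f₁ ^ 2 / vnorm f₀ ^ 2) *
            (1 / ((1 + specNorm ((Jk - Js) * Js⁻¹)) ^ 2 *
              specNorm (Js * H) ^ 2 * specNorm ((Js * H)⁻¹) ^ 2))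
        + 2 * (frobNorm (Js * (H - Js⁻¹)) * specNorm (Js * (Jk⁻¹ - Js⁻¹))
          + specNorm (Js * (Jk⁻¹ - Js⁻¹)) ^ 2) := by
  set y := f₁ - f₀
  set A := Js * (H - Js⁻¹)
  set C := Js * (Jk⁻¹ - Js⁻¹)
  set q := (vnorm y)⁻¹ • y
  set w := (vnorm y)⁻¹ • (Js *ᵥ (u - H *ᵥ y))
  have hq : vnorm q = 1 := by
    rw [vnorm_smul, abs_inv, abs_of_nonneg (vnorm_nonneg y), inv_mul_cancel₀ (vnorm_ne_zero hy)]
  have hAqw : A *ᵥ q + w = C *ᵥ q := by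
    have hu : Jk⁻¹ *ᵥ y = u := by rw [hsecant, mulVec_mulVec, nonsing_inv_mul Jk hJk, one_mulVec]
    simp only [q, w, mulVec_smul, ← smul_add]
    rw [mul_sub_inv_mulVec hJs, mul_sub_inv_mulVec hJs, hu, mulVec_sub Js u]
    congr 1; abel
  have hw : vnorm w = vnorm ((Js * H) *ᵥ f₁) / vnorm y := by
    have hres : u - H *ᵥ y = -(H *ᵥ f₁) := by rw [hstep, mulVec_sub]; abel
    rw [vnorm_smul, hres, mulVec_neg, vnorm_neg, mulVec_mulVec, abs_inv,
      abs_of_nonneg (vnorm_nonneg y), inv_mul_eq_div]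
  have ha : vnorm (A *ᵥ q) ≤ frobNorm A := by
    simpa [hq] using vnorm_mulVec_le_frobNorm A q
  have hc : vnorm (C *ᵥ q) ≤ specNorm C := by
    simpa [hq] using vnorm_mulVec_le_specNorm C q
  have hwle : vnorm w ≤ vnorm (A *ᵥ q) + vnorm (C *ᵥ q) := by
    rw [add_comm, eq_sub_of_add_eq' hAqw]
    exact vnorm_sub_le _ _
  have hratio := residual_ratio_le hJs hH hstep hsecant hy
  rw [← hw] at hratio
  rw [mul_broydenBadUpdate_sub_inv, frobNorm_sq_add_vecMulVec A w hq, hAqw]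
  nlinarith [vnorm_nonneg (A *ᵥ q), vnorm_nonneg (C *ᵥ q), vnorm_nonneg w]

end BroydenBad

theorem stmt11_general {n : ℕ} (F : (Fin n → ℝ) → (Fin n → ℝ))
    (J : (Fin n → ℝ) → Matrix (Fin n) (Fin n) ℝ)
    (hF : ∀ z, HasFDerivAt F (LinearMap.toContinuousLinearMap ((J z).mulVecLin)) z)
    (hJc : Continuous J)
    (xs : Fin n → ℝ) (hJs : IsUnit (J xs).det)
    (x : ℕ → Fin n → ℝ) (H : ℕ → Matrix (Fin n) (Fin n) ℝ)
    (hHk : ∀ k, IsUnit (H k).det)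
    (hyk : ∀ k, F (x (k + 1)) - F (x k) ≠ 0)
    (hx : ∀ k, x (k + 1) = x k - H k *ᵥ F (x k))
    (hH : ∀ k, H (k + 1) = H k +
        ((F (x (k + 1)) - F (x k)) ⬝ᵥ (F (x (k + 1)) - F (x k)))⁻¹ •
          vecMulVec (x (k + 1) - x k - H k *ᵥ (F (x (k + 1)) - F (x k)))
            (F (x (k + 1)) - F (x k))) :
    ∀ k : ℕ, IsUnit (intJac J (x k) (x (k + 1) - x k)).det →
      frobNorm (J xs * (H (k + 1) - (J xs)⁻¹)) ^ 2 ≤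
        frobNorm (J xs * (H k - (J xs)⁻¹)) ^ 2
          - (vnorm (F (x (k + 1))) ^ 2 / vnorm (F (x k)) ^ 2) *
              (1 / ((1 + specNorm ((intJac J (x k) (x (k + 1) - x k) - J xs) * (J xs)⁻¹)) ^ 2 *
                specNorm (J xs * H k) ^ 2 * specNorm ((J xs * H k)⁻¹) ^ 2))
          + 2 * (frobNorm (J xs * (H k - (J xs)⁻¹)) *
                specNorm (J xs * ((intJac J (x k) (x (k + 1) - x k))⁻¹ - (J xs)⁻¹))
              + specNorm (J xs * ((intJac J (x k) (x (k + 1) - x k))⁻¹ - (J xs)⁻¹)) ^ 2) := by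
  intro k hJk
  have hstep : x (k + 1) - x k = -(H k *ᵥ F (x k)) := by rw [hx k]; abel
  have hsecant := sub_eq_intJac_mulVec hF hJc (x k) (x (k + 1) - x k)
  rw [add_sub_cancel] at hsecant
  rw [hH k]
  exact frobNorm_sq_broydenBadUpdate_le hJs (hHk k) hJk hstep hsecant (hyk k)

/-- One-step Frobenius-measure inequality for Broyden's "bad" update with the residual ratio
`F_{k+1}²/F_k²`:
`τ_{k+1}² ≤ τ_k² − (F_{k+1}²/F_k²)·[(1 + ‖(J_k − J*)J*⁻¹‖)²‖J*H_k‖²‖(J*H_k)⁻¹‖²]⁻¹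
  + 2(τ_k‖J̃_k‖ + ‖J̃_k‖²)` whenever `J_k` (and `H_k`) are nonsingular. -/
theorem stmt11 {n : ℕ} (F : (Fin n → ℝ) → (Fin n → ℝ))
    (J : (Fin n → ℝ) → Matrix (Fin n) (Fin n) ℝ)
    (hF : ∀ z, HasFDerivAt F (LinearMap.toContinuousLinearMap ((J z).mulVecLin)) z)
    (hJc : Continuous J)
    (xs : Fin n → ℝ) (hxs : F xs = 0) (hJs : IsUnit (J xs).det)
    (x : ℕ → Fin n → ℝ) (H : ℕ → Matrix (Fin n) (Fin n) ℝ)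
    (hHk : ∀ k, IsUnit (H k).det) (hFk : ∀ k, F (x k) ≠ 0)
    (hyk : ∀ k, F (x (k + 1)) - F (x k) ≠ 0)
    (hx : ∀ k, x (k + 1) = x k - H k *ᵥ F (x k))
    (hH : ∀ k, H (k + 1) = H k +
        ((F (x (k + 1)) - F (x k)) ⬝ᵥ (F (x (k + 1)) - F (x k)))⁻¹ •
          vecMulVec (x (k + 1) - x k - H k *ᵥ (F (x (k + 1)) - F (x k)))
            (F (x (k + 1)) - F (x k))) :
    ∀ k : ℕ, IsUnit (intJac J (x k) (x (k + 1) - x k)).det →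
      frobNorm (J xs * (H (k + 1) - (J xs)⁻¹)) ^ 2 ≤
        frobNorm (J xs * (H k - (J xs)⁻¹)) ^ 2
          - (vnorm (F (x (k + 1))) ^ 2 / vnorm (F (x k)) ^ 2) *
              (1 / ((1 + specNorm ((intJac J (x k) (x (k + 1) - x k) - J xs) * (J xs)⁻¹)) ^ 2 *
                specNorm (J xs * H k) ^ 2 * specNorm ((J xs * H k)⁻¹) ^ 2))
          + 2 * (frobNorm (J xs * (H k - (J xs)⁻¹)) *
                specNorm (J xs * ((intJac J (x k) (x (k + 1) - x k))⁻¹ - (J xs)⁻¹))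
              + specNorm (J xs * ((intJac J (x k) (x (k + 1) - x k))⁻¹ - (J xs)⁻¹)) ^ 2) :=
  stmt11_general F J hF hJc xs hJs x H hHk hyk hx hH
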